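/- Let D := ℝ × ℝ₊ ⊆ ℝ², let b = (b̄, b̃) : ℝ² → ℝ² and let C : ℝ² → S² be continuously differentiable. Then the first-order conditions [for every x ∈ D and every u ∈ N¹_D(x): C(x)u = 0 and ⟨u, b(x) − ½ Σ_{j=1}^2 D(Ce_j)(x)(P_C(x)e_j)⟩ ≤ 0] hold if and only if for every x̄ ∈ ℝ: C(x̄, 0) = C₁₁(x̄, 0)·[[1,0],[0,0]] and b̃(x̄, 0) − ½ 𝟙_{C₁₁(x̄,0) ≠ 0} ∂₁C₁₂(x̄, 0) ≥ 0. -/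

import Mathlib

open Matrix Set Asymptotics
open scoped RealInnerProductSpace NNReal

noncomputable section

/-- `ℝ^d` with the Euclidean inner product and norm. -/
abbrev Vec (d : ℕ) := EuclideanSpace ℝ (Fin d)

/-- real `d × d` matrices. -/
abbrev Mat (d : ℕ) := Matrix (Fin d) (Fin d) ℝ

attribute [local instance] Matrix.normedAddCommGroup Matrix.normedSpace

/-- A matrix acting on a vector of `ℝ^d`. -/
def mv {d : ℕ} (A : Mat d) (u : Vec d) : Vec d := WithLp.toLp 2 (A.mulVec u)

/-- The `j`-th canonical basis vector of `ℝ^d`. -/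
def evec {d : ℕ} (j : Fin d) : Vec d := EuclideanSpace.single j 1

/-- The first-order normal cone `N¹_D(x)`. -/
def normalCone1 {d : ℕ} (D : Set (Vec d)) (x : Vec d) : Set (Vec d) :=
  {u | ∀ ε > (0:ℝ), ∃ δ > (0:ℝ), ∀ y ∈ D, ‖y - x‖ ≤ δ → ⟪u, y - x⟫ ≤ ε * ‖y - x‖}

/-- The second-order normal cone `N²_D(x) ⊆ ℝ^d × S^d`. -/
def normalCone2 {d : ℕ} (D : Set (Vec d)) (x : Vec d) : Set (Vec d × Mat d) :=
  {p | p.2.IsSymm ∧ ∀ ε > (0:ℝ), ∃ δ > (0:ℝ), ∀ y ∈ D, ‖y - x‖ ≤ δ →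
    ⟪p.1, y - x⟫ + (1/2:ℝ) * ⟪y - x, mv p.2 (y - x)⟫ ≤ ε * ‖y - x‖^2}

/-- The first-order normal cone for subsets of `ℝ`. -/
def normalConeR (D : Set ℝ) (x : ℝ) : Set ℝ :=
  {u | ∀ ε > (0:ℝ), ∃ δ > (0:ℝ), ∀ y ∈ D, |y - x| ≤ δ → u * (y - x) ≤ ε * |y - x|}

/-- The matrix of the orthogonal projection of `ℝ^d` onto the column space (range) of `A`,
i.e. `A A⁺` with `A⁺` the Moore–Penrose pseudoinverse. -/
def projRange {d : ℕ} (A : Mat d) : Mat d :=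
  Matrix.toEuclideanLin.symm
    (((LinearMap.range (Matrix.toEuclideanLin A)).subtypeL.comp
      (Submodule.orthogonalProjectionOnto (LinearMap.range (Matrix.toEuclideanLin A)))).toLinearMap)

/-- The element of `ℝ²` with the two given coordinates. -/
def vec2 (a b : ℝ) : Vec 2 := WithLp.toLp 2 ![a, b]

/-- The Hessian matrix of `φ : ℝ^d → ℝ` at `x`. -/
def hessMat {d : ℕ} (φ : Vec d → ℝ) (x : Vec d) : Mat d :=
  Matrix.of fun i j => fderiv ℝ (fun y => fderiv ℝ φ y (evec j)) x (evec i)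

/-!
At an interior point of `D` the normal cone is `{0}`, so only boundary points `x = (x̄, 0)`
matter, where `N¹_D(x) = {0} × ℝ₋`. Testing with `u = -e₂`, `C(x)u = 0` kills the second column
of `C(x)`, hence by symmetry `C(x) = C₁₁(x) E₁₁`. Its range projection is `E₁₁` when
`C₁₁(x) ≠ 0` and `0` otherwise, so the second component of the correction term is
`𝟙_{C₁₁ ≠ 0} ∂₁C₂₁ = 𝟙_{C₁₁ ≠ 0} ∂₁C₁₂`, and `⟨-e₂, ·⟩ ≤ 0` becomes the drift condition.
-/

open Filter Topology

lemma mv_apply {d : ℕ} (A : Mat d) (u : Vec d) (i : Fin d) : mv A u i = ∑ j, A i j * u j := rfl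

lemma evec_apply {d : ℕ} (j i : Fin d) : evec j i = if i = j then 1 else 0 := by
  simp [evec]

lemma mv_evec_apply {d : ℕ} (A : Mat d) (j i : Fin d) : mv A (evec j) i = A i j := by
  simp [mv_apply, evec]

lemma inner_vec_two (u v : Vec 2) : ⟪u, v⟫ = u 0 * v 0 + u 1 * v 1 := by
  simp [PiLp.inner_apply, Fin.sum_univ_two, mul_comm]

lemma inner_nonpos_of_mem_normalCone1 {d : ℕ} {D : Set (Vec d)} {x u : Vec d}
    (hu : u ∈ normalCone1 D x) {h : Vec d} (hh : ∀ᶠ t in 𝓝[>] (0 : ℝ), x + t • h ∈ D) :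
    ⟪u, h⟫ ≤ 0 := by
  by_contra! hpos
  have hh0 : 0 < ‖h‖ := norm_pos_iff.2 (by rintro rfl; simp at hpos)
  obtain ⟨δ, hδ, hδD⟩ := hu (⟪u, h⟫ / (2 * ‖h‖)) (by positivity)
  have hsmall : ∀ᶠ t in 𝓝[>] (0 : ℝ), ‖t • h‖ ≤ δ := by
    have : Tendsto (fun t : ℝ => ‖t • h‖) (𝓝 0) (𝓝 0) :=
      (by fun_prop : Continuous fun t : ℝ => ‖t • h‖).tendsto' 0 0 (by simp)
    exact (this.mono_left nhdsWithin_le_nhds).eventually (ge_mem_nhds hδ)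
  obtain ⟨t, ⟨htD, htδ⟩, ht⟩ := ((hh.and hsmall).and self_mem_nhdsWithin).exists
  have key := hδD _ htD (by simpa using htδ)
  rw [add_sub_cancel_left, real_inner_smul_right, norm_smul, Real.norm_of_nonneg (le_of_lt ht)]
    at key
  have : t * ⟪u, h⟫ ≤ t * (⟪u, h⟫ / 2) := by
    calc t * ⟪u, h⟫ ≤ ⟪u, h⟫ / (2 * ‖h‖) * (t * ‖h‖) := key
      _ = t * (⟪u, h⟫ / 2) := by field_simp
  linarith [mul_pos (show (0:ℝ) < t from ht) hpos]

lemma normalCone1_of_mem_interior {d : ℕ} {D : Set (Vec d)} {x : Vec d} (hx : x ∈ interior D) :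
    normalCone1 D x = {0} := by
  ext u
  refine ⟨fun hu => ?_, fun hu => ?_⟩
  · have hcont : Tendsto (fun t : ℝ => x + t • u) (𝓝 0) (𝓝 x) :=
      (by fun_prop : Continuous fun t : ℝ => x + t • u).tendsto' 0 x (by simp)
    have := inner_nonpos_of_mem_normalCone1 hu
      ((hcont.mono_left nhdsWithin_le_nhds).eventually (mem_interior_iff_mem_nhds.1 hx))
    exact real_inner_self_nonpos.1 this
  · rw [Set.mem_singleton_iff.1 hu]
    intro ε hε
    exact ⟨1, one_pos, fun y _ _ => by simp; positivity⟩

lemma mem_normalCone1_upperHalfPlane_iff {x u : Vec 2} (hx : x 1 = 0) :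
    u ∈ normalCone1 {p : Vec 2 | 0 ≤ p 1} x ↔ u 0 = 0 ∧ u 1 ≤ 0 := by
  constructor
  · intro hu
    have feasible : ∀ a b : ℝ, 0 ≤ b → ⟪u, vec2 a b⟫ ≤ 0 := fun a b hb =>
      inner_nonpos_of_mem_normalCone1 hu (eventually_mem_nhdsWithin.mono fun t ht => by
        simp [vec2, hx]; exact mul_nonneg (le_of_lt ht) hb)
    have h1 := feasible 1 0 le_rfl
    have h2 := feasible (-1) 0 le_rfl
    have h3 := feasible 0 1 zero_le_one
    simp [inner_vec_two, vec2] at h1 h2 h3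
    exact ⟨by linarith, h3⟩
  · rintro ⟨hu0, hu1⟩ ε hε
    refine ⟨1, one_pos, fun y (hy : 0 ≤ y 1) _ => ?_⟩
    have : ⟪u, y - x⟫ = u 1 * y 1 := by simp [inner_vec_two, hu0, hx]
    rw [this]
    nlinarith [norm_nonneg (y - x)]

lemma mem_interior_upperHalfPlane {x : Vec 2} (hx : 0 < x 1) :
    x ∈ interior {p : Vec 2 | 0 ≤ p 1} := by
  have hopen : IsOpen {p : Vec 2 | 0 < p 1} := isOpen_lt continuous_const (by fun_prop)
  exact mem_interior_iff_mem_nhds.2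
    (mem_of_superset (hopen.mem_nhds hx) (ofPred_subset_ofPred.2 fun _ => le_of_lt))

lemma fderiv_euclidean_apply {ι E : Type*} [Fintype ι] [NormedAddCommGroup E] [NormedSpace ℝ E]
    {f : E → EuclideanSpace ℝ ι} {x : E} (hf : DifferentiableAt ℝ f x) (v : E) (i : ι) :
    fderiv ℝ f x v i = fderiv ℝ (fun y => f y i) x v :=
  (DFunLike.congr_fun
    ((EuclideanSpace.proj (𝕜 := ℝ) i).hasFDerivAt.comp x hf.hasFDerivAt).fderiv v).symm

lemma differentiableAt_mv_evec {d : ℕ} {E : Type*} [NormedAddCommGroup E] [NormedSpace ℝ E]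
    {C : E → Mat d} {x : E} (hC : DifferentiableAt ℝ C x) (j : Fin d) :
    DifferentiableAt ℝ (fun y => mv (C y) (evec j)) x :=
  differentiableAt_euclidean.2 fun i => by
    simpa only [mv_evec_apply] using differentiableAt_pi.1 (differentiableAt_pi.1 hC i) j

lemma fderiv_mv_evec_apply {d : ℕ} {E : Type*} [NormedAddCommGroup E] [NormedSpace ℝ E]
    {C : E → Mat d} {x : E} (hC : DifferentiableAt ℝ C x) (v : E) (i j : Fin d) :
    fderiv ℝ (fun y => mv (C y) (evec j)) x v i = fderiv ℝ (fun y => C y i j) x v := by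
  simp only [fderiv_euclidean_apply (differentiableAt_mv_evec hC j), mv_evec_apply]

lemma projRange_eq {d : ℕ} (A : Mat d) :
    projRange A = toEuclideanLin.symm (LinearMap.range (toEuclideanLin A)).starProjection := rfl

lemma projRange_smul {d : ℕ} (A : Mat d) {c : ℝ} (hc : c ≠ 0) :
    projRange (c • A) = projRange A := by
  simp only [projRange_eq, map_smul, LinearMap.range_smul _ _ hc]

lemma projRange_of_isHermitian_of_isIdempotentElem {d : ℕ} {P : Mat d} (hP : P.IsHermitian)
    (hPP : IsIdempotentElem P) : projRange P = P := by
  have hp : (toEuclideanLin P).IsSymmetricProjection := by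
    refine ⟨LinearMap.ext fun v => ?_, isSymmetric_toEuclideanLin_iff.mpr hP⟩
    ext i
    simp [Matrix.mulVec_mulVec, hPP.eq]
  obtain ⟨_, hp⟩ := LinearMap.isSymmetricProjection_iff_eq_coe_starProjection_range.mp hp
  rw [projRange_eq, ← hp, LinearEquiv.symm_apply_apply]

lemma projRange_smul_e00 (c : ℝ) :
    projRange (c • !![1, 0; 0, 0] : Mat 2) = if c = 0 then 0 else !![1, 0; 0, 0] := by
  split_ifs with hc
  · rw [hc, zero_smul]
    exact projRange_of_isHermitian_of_isIdempotentElem isHermitian_zero IsIdempotentElem.zero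
  · rw [projRange_smul _ hc]
    exact projRange_of_isHermitian_of_isIdempotentElem
      (by ext i j; fin_cases i <;> fin_cases j <;> simp)
      (by ext i j; fin_cases i <;> fin_cases j <;> simp)

lemma forall_mv_eq_zero_and_inner_nonpos_iff {A : Mat 2} (hA : A.IsSymm) (v : Vec 2) :
    (∀ u : Vec 2, u 0 = 0 ∧ u 1 ≤ 0 → mv A u = 0 ∧ ⟪u, v⟫ ≤ 0) ↔
      A = A 0 0 • !![1, 0; 0, 0] ∧ 0 ≤ v 1 := by
  have hA10 : A 1 0 = A 0 1 := by simpa using congrFun (congrFun hA 0) 1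
  constructor
  · intro h
    obtain ⟨hAu, hvu⟩ := h (vec2 0 (-1)) (by simp [vec2])
    have hcol : ∀ i, A i 1 = 0 := fun i => by
      simpa [mv_apply, vec2] using congrArg (· i) hAu
    refine ⟨?_, by simpa [inner_vec_two, vec2] using hvu⟩
    ext i j
    fin_cases i <;> fin_cases j <;> simp [hcol, hA10]
  · rintro ⟨hAe, hv⟩ u ⟨hu0, hu1⟩
    refine ⟨?_, by rw [inner_vec_two, hu0]; nlinarith⟩
    ext i
    rw [hAe]
    fin_cases i <;> simp [mv_apply, hu0]

lemma sum_fderiv_mv_evec_projRange_apply_one {C : Vec 2 → Mat 2} (hCsymm : ∀ y, (C y).IsSymm)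
    {x : Vec 2} (hC : DifferentiableAt ℝ C x) (hCx : C x = C x 0 0 • !![1, 0; 0, 0]) :
    (∑ j, fderiv ℝ (fun y => mv (C y) (evec j)) x (mv (projRange (C x)) (evec j))) 1
      = (if C x 0 0 ≠ 0 then 1 else 0) * fderiv ℝ (fun y => C y 0 1) x (evec 0) := by
  have hsymm : (fun y => C y 1 0) = fun y => C y 0 1 := funext fun y => by
    simpa using congrFun (congrFun (hCsymm y) 0) 1
  have hP : projRange (C x) = if C x 0 0 = 0 then 0 else !![1, 0; 0, 0] := by
    conv_lhs => rw [hCx]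
    exact projRange_smul_e00 _
  have hcol : ∀ j, mv (!![1, 0; 0, 0] : Mat 2) (evec j) = if j = 0 then evec 0 else 0 := by
    intro j; ext i; fin_cases i <;> fin_cases j <;> simp [mv_evec_apply, evec_apply]
  by_cases hc : C x 0 0 = 0
  · simp [hP, hc, mv]
  · simp [hP, hc, hcol, Fin.sum_univ_two, fderiv_mv_evec_apply hC, hsymm]

lemma firstOrder_at_boundary_iff {C : Vec 2 → Mat 2} (hCsymm : ∀ y, (C y).IsSymm) {x : Vec 2}
    (hC : DifferentiableAt ℝ C x) (hx : x 1 = 0) (v : Vec 2) :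
    (∀ u ∈ normalCone1 {p : Vec 2 | 0 ≤ p 1} x, mv (C x) u = 0 ∧
      ⟪u, v - (1/2 : ℝ) •
        ∑ j, fderiv ℝ (fun y => mv (C y) (evec j)) x (mv (projRange (C x)) (evec j))⟫ ≤ 0) ↔
    (C x = C x 0 0 • !![1, 0; 0, 0] ∧
      0 ≤ v 1 - (1/2 : ℝ) * (if C x 0 0 ≠ 0 then (1:ℝ) else 0) *
        fderiv ℝ (fun y => C y 0 1) x (evec 0)) := by
  simp only [mem_normalCone1_upperHalfPlane_iff hx]
  rw [forall_mv_eq_zero_and_inner_nonpos_iff (hCsymm x)]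
  refine and_congr_right fun hCx => ?_
  rw [PiLp.sub_apply, PiLp.smul_apply, smul_eq_mul,
    sum_fderiv_mv_evec_projRange_apply_one hCsymm hC hCx, mul_assoc]

theorem stmt8 (b : Vec 2 → Vec 2) (C : Vec 2 → Mat 2) (hCsymm : ∀ y, (C y).IsSymm)
    (hC1 : ContDiff ℝ 1 C)
    (D : Set (Vec 2)) (hD : D = {p : Vec 2 | 0 ≤ p 1}) :
    (∀ x ∈ D, ∀ u ∈ normalCone1 D x, mv (C x) u = 0 ∧
      ⟪u, b x - (1/2 : ℝ) •
        ∑ j, fderiv ℝ (fun y => mv (C y) (evec j)) x (mv (projRange (C x)) (evec j))⟫ ≤ 0)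
    ↔
    (∀ xb : ℝ,
      C (vec2 xb 0) = C (vec2 xb 0) 0 0 • !![1, 0; 0, 0] ∧
      0 ≤ (b (vec2 xb 0)) 1 - (1/2 : ℝ) * (if C (vec2 xb 0) 0 0 ≠ 0 then (1:ℝ) else 0) *
        fderiv ℝ (fun y => C y 0 1) (vec2 xb 0) (evec 0)) := by
  subst hD
  have hC : ∀ x, DifferentiableAt ℝ C x := hC1.differentiable one_ne_zero
  have boundary (xb : ℝ) := firstOrder_at_boundary_iff hCsymm (hC (vec2 xb 0)) (by simp [vec2])
    (b (vec2 xb 0))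
  constructor
  · exact fun H xb => (boundary xb).1 (H _ (by simp [vec2]))
  · intro H x (hx : 0 ≤ x 1)
    rcases hx.eq_or_lt with hx | hx
    · obtain ⟨xb, rfl⟩ : ∃ xb, x = vec2 xb 0 :=
        ⟨x 0, by ext i; fin_cases i <;> simp [vec2, hx]⟩
      exact (boundary xb).2 (H xb)
    · rw [normalCone1_of_mem_interior (mem_interior_upperHalfPlane hx)]
      simp [mv]
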